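/- arXiv:1812.05848 — 2 statements merged into one kernel-verified Lean document; each statement's English description precedes it below -/
import Mathlib

section
/- Let 0<s<1 and 1<p<∞. Let u ∈ H^{s,p}(ℝ^n) and let {u_j} ⊂ H^{s,p}(ℝ^n) be a sequence with ‖u_j-u‖_{L^p} + ‖D^s u_j - D^s u‖_{L^p} → 0. Assume there is a compact set K ⊂ ℝ^n containing the supports of all u_j. Then D^s u_j → D^s u in L^r(ℝ^n,ℝ^n) for every r ∈ [1,p]. -/
/-!
Off a ball containing `K`, both `u_j` and `u` vanish, so the principal values defining
`D^s u_j(x)` and `D^s u(x)` are ordinary integrals over `K` with a kernel bounded by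
`|x - y|^{-(n+s)} ≲ (1 + |x|)^{-(n+s)}`. Hence there
`|D^s u_j(x) - D^s u(x)| ≲ ‖u_j - u‖_{L¹(K)} (1 + |x|)^{-(n+s)}`, and this profile lies in `L^r`
for every `r ≥ 1` because `(n+s) r > n`. On the ball, which has finite measure, Hölder's
inequality bounds the `L^r` norm by the `L^p` norm.
-/

open MeasureTheory Filter Topology
open scoped ENNReal

noncomputable section

abbrev Euc (n : ℕ) : Type := EuclideanSpace ℝ (Fin n)

def cns (n : ℕ) (s : ℝ) : ℝ :=
  -((n : ℝ) + s - 1) * Real.Gamma (((n : ℝ) + s - 1) / 2) /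
    (Real.pi ^ ((n : ℝ) / 2) * (2 : ℝ) ^ (1 - s) * Real.Gamma ((1 - s) / 2))

/-- `HasFracGrad n m s u x A`: the principal-value limits defining the Riesz
`s`-fractional gradient of `u` at `x` exist and equal the matrix `A`
(rows indexed by `Fin m`, viewed as vectors of `ℝ^n`). -/
def HasFracGrad (n m : ℕ) (s : ℝ) (u : Euc n → Euc m) (x : Euc n)
    (A : Fin m → Euc n) : Prop :=
  ∀ (i : Fin m) (j : Fin n),
    Tendsto (fun r : ℝ => cns n s *
        ∫ y in {y : Euc n | r ≤ ‖x - y‖},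
          (u x i - u y i) * (x j - y j) / ‖x - y‖ ^ ((n : ℝ) + s + 1))
      (𝓝[>] (0 : ℝ)) (𝓝 (A i j))

/-- scalar version: fractional gradient of `u : ℝ^n → ℝ` at `x` equals `v : ℝ^n`. -/
def HasFracGradS (n : ℕ) (s : ℝ) (u : Euc n → ℝ) (x : Euc n) (v : Euc n) : Prop :=
  ∀ j : Fin n,
    Tendsto (fun r : ℝ => cns n s *
        ∫ y in {y : Euc n | r ≤ ‖x - y‖},
          (u x - u y) * (x j - y j) / ‖x - y‖ ^ ((n : ℝ) + s + 1))
      (𝓝[>] (0 : ℝ)) (𝓝 (v j))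

/-- `s`-fractional divergence of `φ` at `x` has value `d`. -/
def HasFracDiv (n : ℕ) (s : ℝ) (φ : Euc n → Fin n → ℝ) (x : Euc n) (d : ℝ) : Prop :=
  Tendsto (fun r : ℝ => -cns n s *
      ∫ y in {y : Euc n | r ≤ ‖x - y‖},
        (∑ j, (φ x j + φ y j) * (x j - y j)) / ‖x - y‖ ^ ((n : ℝ) + s + 1))
    (𝓝[>] (0 : ℝ)) (𝓝 d)

/-- membership in the fractional space `H^{s,p}(ℝ^n, ℝ^m)`. -/
def MemHsp (n m : ℕ) (s p : ℝ) (u : Euc n → Euc m) : Prop :=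
  MemLp u (ENNReal.ofReal p) (volume : Measure (Euc n)) ∧
  ∃ A : Euc n → Fin m → Euc n,
    (∀ᵐ x ∂(volume : Measure (Euc n)), HasFracGrad n m s u x (A x)) ∧
    MemLp A (ENNReal.ofReal p) (volume : Measure (Euc n))

section Lp

variable {α E F : Type*} [MeasurableSpace α] {μ : Measure α}
  [NormedAddCommGroup E] [NormedAddCommGroup F]

theorem ae_eq_zero_off_of_tendsto_eLpNorm {p : ℝ≥0∞} (hp : p ≠ 0) {f : ℕ → α → E} {g : α → E}
    {K : Set α} (hK : MeasurableSet K) (hg : AEStronglyMeasurable g μ)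
    (hfK : ∀ j, Function.support (f j) ⊆ K)
    (hfg : Tendsto (fun j => eLpNorm (f j - g) p μ) atTop (𝓝 0)) :
    ∀ᵐ x ∂μ, x ∉ K → g x = 0 := by
  have hle : ∀ j, eLpNorm (Kᶜ.indicator g) p μ ≤ eLpNorm (f j - g) p μ := by
    refine fun j => eLpNorm_mono fun x => ?_
    by_cases hx : x ∈ K
    · simp [hx]
    · simp [hx, Function.notMem_support.mp fun h => hx (hfK j h)]
  have hzero : eLpNorm (Kᶜ.indicator g) p μ = 0 :=
    le_antisymm (ge_of_tendsto' hfg hle) bot_le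
  filter_upwards [(eLpNorm_eq_zero_iff (hg.indicator hK.compl) hp).mp hzero] with x hx hxK
  simpa [hxK] using hx

theorem eLpNorm_le_eLpNorm_restrict_add_eLpNorm_restrict_compl {p : ℝ≥0∞} (hp : 1 ≤ p)
    {f : α → E} (hf : AEStronglyMeasurable f μ) {S : Set α} (hS : MeasurableSet S) :
    eLpNorm f p μ ≤ eLpNorm f p (μ.restrict S) + eLpNorm f p (μ.restrict Sᶜ) := by
  calc eLpNorm f p μ = eLpNorm (S.indicator f + Sᶜ.indicator f) p μ := by
        rw [Set.indicator_self_add_compl]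
    _ ≤ eLpNorm (S.indicator f) p μ + eLpNorm (Sᶜ.indicator f) p μ :=
        eLpNorm_add_le (hf.indicator hS) (hf.indicator hS.compl) hp
    _ = _ := by
        rw [eLpNorm_indicator_eq_eLpNorm_restrict hS,
          eLpNorm_indicator_eq_eLpNorm_restrict hS.compl]

theorem eLpNorm_restrict_le_eLpNorm_mul_rpow_measure {p q : ℝ≥0∞} (hpq : p ≤ q) {f : α → E}
    (hf : AEStronglyMeasurable f μ) (S : Set α) :
    eLpNorm f p (μ.restrict S) ≤ eLpNorm f q μ * μ S ^ (1 / p.toReal - 1 / q.toReal) := by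
  have h := eLpNorm_le_eLpNorm_mul_rpow_measure_univ (μ := μ.restrict S) hpq hf.restrict
  rw [Measure.restrict_apply_univ] at h
  exact h.trans (mul_le_mul_left (eLpNorm_mono_measure _ Measure.restrict_le_self) _)

theorem measure_rpow_one_div_sub_one_div_ne_top {p q : ℝ≥0∞} (hp : 1 ≤ p) (hpq : p ≤ q)
    {S : Set α} (hS : μ S ≠ ∞) : μ S ^ (1 / p.toReal - 1 / q.toReal) ≠ ∞ := by
  refine ENNReal.rpow_ne_top_of_nonneg (sub_nonneg.2 ?_) hS
  rcases eq_or_ne q ∞ with rfl | hq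
  · simp
  · exact one_div_le_one_div_of_le
      (ENNReal.toReal_pos (zero_lt_one.trans_le hp).ne' (ne_top_of_le_ne_top hq hpq))
      (ENNReal.toReal_mono hq hpq)

theorem tendsto_setIntegral_norm_of_tendsto_eLpNorm {p : ℝ≥0∞} (hp : 1 ≤ p) {f : ℕ → α → E}
    (hf : ∀ j, AEStronglyMeasurable (f j) μ) {K : Set α} (hK : μ K ≠ ∞)
    (hfp : Tendsto (fun j => eLpNorm (f j) p μ) atTop (𝓝 0)) :
    Tendsto (fun j => ∫ x in K, ‖f j x‖ ∂μ) atTop (𝓝 0) := by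
  have hL1 : Tendsto (fun j => eLpNorm (f j) 1 (μ.restrict K)) atTop (𝓝 0) := by
    have hbound := ENNReal.Tendsto.mul_const hfp
      (Or.inr (measure_rpow_one_div_sub_one_div_ne_top le_rfl hp hK))
    rw [zero_mul] at hbound
    exact tendsto_of_tendsto_of_tendsto_of_le_of_le tendsto_const_nhds hbound
      (fun _ => zero_le) fun j => eLpNorm_restrict_le_eLpNorm_mul_rpow_measure hp (hf j) K
  have h := (ENNReal.tendsto_toReal ENNReal.zero_ne_top).comp hL1
  simp only [ENNReal.toReal_zero] at h
  refine h.congr fun j => ?_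
  simp [Function.comp, eLpNorm_one_eq_lintegral_enorm,
    integral_norm_eq_lintegral_enorm (hf j).restrict]

theorem tendsto_eLpNorm_of_le_mul_off {p r : ℝ≥0∞} (hr : 1 ≤ r) (hrp : r ≤ p)
    {f : ℕ → α → E} (hf : ∀ j, AEStronglyMeasurable (f j) μ)
    (hfp : Tendsto (fun j => eLpNorm (f j) p μ) atTop (𝓝 0))
    {S : Set α} (hS : MeasurableSet S) (hμS : μ S ≠ ∞) {G : α → F} (hG : MemLp G r μ)
    {a : ℕ → ℝ} (ha : Tendsto a atTop (𝓝 0))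
    (hfG : ∀ j, ∀ᵐ x ∂μ, x ∉ S → ‖f j x‖ ≤ a j * ‖G x‖) :
    Tendsto (fun j => eLpNorm (f j) r μ) atTop (𝓝 0) := by
  have hout : ∀ j, eLpNorm (f j) r (μ.restrict Sᶜ) ≤ ENNReal.ofReal (a j) * eLpNorm G r μ := by
    intro j
    refine (eLpNorm_le_mul_eLpNorm_of_ae_le_mul ?_ r).trans
      (mul_le_mul_right (eLpNorm_mono_measure _ Measure.restrict_le_self) _)
    filter_upwards [ae_restrict_of_ae (hfG j), ae_restrict_mem hS.compl] with x hx hxS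
    exact hx hxS
  have hbound : Tendsto (fun j => eLpNorm (f j) p μ * μ S ^ (1 / r.toReal - 1 / p.toReal)
      + ENNReal.ofReal (a j) * eLpNorm G r μ) atTop (𝓝 0) := by
    have hin := ENNReal.Tendsto.mul_const hfp
      (Or.inr (measure_rpow_one_div_sub_one_div_ne_top hr hrp hμS))
    have ha' := ENNReal.Tendsto.mul_const (ENNReal.tendsto_ofReal ha) (Or.inr hG.2.ne)
    simpa using hin.add ha'
  refine tendsto_of_tendsto_of_tendsto_of_le_of_le tendsto_const_nhds hbound
    (fun _ => zero_le) fun j => ?_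
  exact (eLpNorm_le_eLpNorm_restrict_add_eLpNorm_restrict_compl hr (hf j) hS).trans
    (add_le_add (eLpNorm_restrict_le_eLpNorm_mul_rpow_measure hrp (hf j) S) (hout j))

end Lp

theorem EuclideanSpace.norm_le_sqrt_card_mul {ι : Type*} [Fintype ι] {w : EuclideanSpace ℝ ι}
    {b : ℝ} (hb : 0 ≤ b) (hw : ∀ i, |w i| ≤ b) : ‖w‖ ≤ √(Fintype.card ι) * b := by
  rw [EuclideanSpace.norm_eq]
  calc √(∑ i, ‖w i‖ ^ 2) ≤ √(∑ _i : ι, b ^ 2) := by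
        gcongr with i
        exact hw i
    _ = √(Fintype.card ι) * b := by
        rw [Finset.sum_const, Finset.card_univ, nsmul_eq_mul, Real.sqrt_mul (by positivity),
          Real.sqrt_sq hb]

theorem EuclideanSpace.abs_sub_apply_div_rpow_le {ι : Type*} [Fintype ι]
    {x y : EuclideanSpace ℝ ι} {γ ρ : ℝ} (hγ : 1 ≤ γ) (hρ : 0 < ρ) (hxy : ρ ≤ ‖x - y‖) (i : ι) :
    |(x i - y i) / ‖x - y‖ ^ γ| ≤ ρ ^ (1 - γ) := by
  have hd : 0 < ‖x - y‖ := hρ.trans_le hxy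
  rw [abs_div, abs_of_pos (Real.rpow_pos_of_pos hd γ)]
  calc |x i - y i| / ‖x - y‖ ^ γ ≤ ‖x - y‖ / ‖x - y‖ ^ γ := by
        gcongr
        simpa using PiLp.norm_apply_le (x - y) i
    _ = ‖x - y‖ ^ (1 - γ) := by rw [Real.rpow_sub hd, Real.rpow_one]
    _ ≤ ρ ^ (1 - γ) := Real.rpow_le_rpow_of_nonpos hρ hxy (by linarith)

theorem memLp_one_add_norm_rpow_neg {E : Type*} [NormedAddCommGroup E] [NormedSpace ℝ E]
    [FiniteDimensional ℝ E] [MeasurableSpace E] [BorelSpace E] {μ : Measure E}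
    [μ.IsAddHaarMeasure] {β : ℝ} {r : ℝ≥0∞} (hr0 : r ≠ 0) (hr : r ≠ ∞)
    (hβr : (Module.finrank ℝ E : ℝ) < β * r.toReal) :
    MemLp (fun x => (1 + ‖x‖) ^ (-β)) r μ := by
  refine (integrable_norm_rpow_iff (Measurable.aestronglyMeasurable (by fun_prop)) hr0 hr).1 ?_
  refine (integrable_one_add_norm hβr).congr (Eventually.of_forall fun x => ?_)
  dsimp only
  rw [Real.norm_of_nonneg (by positivity), ← Real.rpow_mul (by positivity), neg_mul]

namespace HasFracGradS

variable {n : ℕ} {s : ℝ} {K : Set (Euc n)} {x : Euc n} {ρ : ℝ}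

theorem apply_eq_setIntegral {v : Euc n → ℝ} {V : Euc n} (hV : HasFracGradS n s v x V)
    (hvK : ∀ᵐ y, y ∉ K → v y = 0) (hvx : v x = 0) (hρ : 0 < ρ)
    (hxK : ∀ y ∈ K, ρ ≤ ‖x - y‖) (j : Fin n) :
    V j = -cns n s * ∫ y in K, v y * ((x j - y j) / ‖x - y‖ ^ ((n : ℝ) + s + 1)) := by
  set F : Euc n → ℝ := fun y => (v x - v y) * (x j - y j) / ‖x - y‖ ^ ((n : ℝ) + s + 1)
  have htrunc : ∀ r ∈ Set.Ioc 0 ρ, ∫ y in {y | r ≤ ‖x - y‖}, F y = ∫ y in K, F y := by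
    intro r hr
    refine setIntegral_eq_of_subset_of_ae_sdiff_eq_zero
      (isClosed_le continuous_const (continuous_const.sub continuous_id).norm).nullMeasurableSet
      (fun y hy => hr.2.trans (hxK y hy)) ?_
    filter_upwards [hvK] with y hy hyK
    simp [F, hvx, hy hyK.2]
  have hconst : Tendsto (fun r => cns n s * ∫ y in {y | r ≤ ‖x - y‖}, F y) (𝓝[>] 0)
      (𝓝 (cns n s * ∫ y in K, F y)) := by
    refine tendsto_const_nhds.congr' ?_
    filter_upwards [Ioc_mem_nhdsGT hρ] with r hr
    rw [htrunc r hr]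
  rw [tendsto_nhds_unique (hV j) hconst, neg_mul, ← mul_neg, ← integral_neg]
  congr 2 with y
  simp only [F, hvx]
  ring

theorem norm_sub_le {v w : Euc n → ℝ} {V W : Euc n} (hs : 0 ≤ s) (hV : HasFracGradS n s v x V)
    (hW : HasFracGradS n s w x W) (hK : MeasurableSet K) (hvi : IntegrableOn v K)
    (hwi : IntegrableOn w K) (hvK : ∀ᵐ y, y ∉ K → v y = 0) (hwK : ∀ᵐ y, y ∉ K → w y = 0)
    (hvx : v x = 0) (hwx : w x = 0) (hρ : 0 < ρ) (hxK : ∀ y ∈ K, ρ ≤ ‖x - y‖) :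
    ‖V - W‖ ≤ √n * |cns n s| * ρ ^ (-((n : ℝ) + s)) * ∫ y in K, ‖v y - w y‖ := by
  set γ : ℝ := (n : ℝ) + s + 1
  have hγ : 1 ≤ γ := by simp only [γ]; linarith [n.cast_nonneg (α := ℝ)]
  have hkernel : ∀ j, ∀ y ∈ K, ‖(x j - y j) / ‖x - y‖ ^ γ‖ ≤ ρ ^ (-((n : ℝ) + s)) := by
    intro j y hy
    rw [Real.norm_eq_abs, show -((n : ℝ) + s) = 1 - γ by ring]
    exact EuclideanSpace.abs_sub_apply_div_rpow_le hγ hρ (hxK y hy) j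
  have hint : ∀ {z : Euc n → ℝ}, IntegrableOn z K → ∀ j,
      IntegrableOn (fun y => z y * ((x j - y j) / ‖x - y‖ ^ γ)) K := by
    intro z hz j
    refine (hz.bdd_mul (c := ρ ^ (-((n : ℝ) + s)))
      (Measurable.aestronglyMeasurable (by fun_prop)) ?_).congr
      (Eventually.of_forall fun y => mul_comm _ _)
    filter_upwards [ae_restrict_mem hK] with y hy
    exact hkernel j y hy
  have hcoord : ∀ j,
      |(V - W) j| ≤ |cns n s| * ((∫ y in K, ‖v y - w y‖) * ρ ^ (-((n : ℝ) + s))) := by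
    intro j
    have hdiff : (V - W) j
        = -cns n s * ∫ y in K, (v y - w y) * ((x j - y j) / ‖x - y‖ ^ γ) := by
      simp only [PiLp.sub_apply, sub_mul]
      rw [integral_sub (hint hvi j) (hint hwi j), mul_sub,
        hV.apply_eq_setIntegral hvK hvx hρ hxK j, hW.apply_eq_setIntegral hwK hwx hρ hxK j]
    rw [hdiff, abs_mul, abs_neg, ← integral_mul_const, ← Real.norm_eq_abs (∫ _ in K, _)]
    gcongr
    refine norm_integral_le_of_norm_le (((hvi.sub hwi).norm).mul_const _) ?_
    filter_upwards [ae_restrict_mem hK] with y hy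
    rw [norm_mul]
    exact mul_le_mul_of_nonneg_left (hkernel j y hy) (norm_nonneg _)
  refine (EuclideanSpace.norm_le_sqrt_card_mul (by positivity) hcoord).trans_eq ?_
  rw [Fintype.card_fin]
  ring

theorem norm_sub_le_of_subset_closedBall {v w : Euc n → ℝ} {V W : Euc n} (hs : 0 ≤ s)
    (hV : HasFracGradS n s v x V) (hW : HasFracGradS n s w x W) (hK : MeasurableSet K)
    (hvi : IntegrableOn v K) (hwi : IntegrableOn w K) (hvK : ∀ᵐ y, y ∉ K → v y = 0)
    (hwK : ∀ᵐ y, y ∉ K → w y = 0) (hvx : x ∉ K → v x = 0) (hwx : x ∉ K → w x = 0) {R : ℝ}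
    (hKR : K ⊆ Metric.closedBall 0 R) (hx : 2 * R + 1 ≤ ‖x‖) :
    ‖V - W‖ ≤ (√n * |cns n s| * 2 ^ ((n : ℝ) + s) * ∫ y in K, ‖v y - w y‖) *
      (1 + ‖x‖) ^ (-((n : ℝ) + s)) := by
  have hxK : ∀ y ∈ K, (1 + ‖x‖) / 2 ≤ ‖x - y‖ := by
    intro y hy
    have hyR : ‖y‖ ≤ R := by simpa using hKR hy
    linarith [norm_sub_norm_le x y]
  have hx_notMem : x ∉ K := fun hxK' => by
    have hxR : ‖x‖ ≤ R := by simpa using hKR hxK'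
    linarith [norm_nonneg x]
  refine (norm_sub_le hs hV hW hK hvi hwi hvK hwK (hvx hx_notMem) (hwx hx_notMem)
    (by positivity) hxK).trans_eq ?_
  rw [Real.div_rpow (by positivity) zero_le_two, Real.rpow_neg zero_le_two, div_inv_eq_mul]
  ring

end HasFracGradS

theorem stmt6_general (n : ℕ) (s p : ℝ) (hs0 : 0 < s) (hp1 : 1 < p)
    (u : Euc n → ℝ) (Du : Euc n → Euc n)
    (hu : MemLp u (ENNReal.ofReal p) (volume : Measure (Euc n)))
    (hDu : ∀ᵐ x ∂(volume : Measure (Euc n)), HasFracGradS n s u x (Du x))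
    (hDup : MemLp Du (ENNReal.ofReal p) (volume : Measure (Euc n)))
    (uj : ℕ → Euc n → ℝ) (Duj : ℕ → Euc n → Euc n)
    (huj : ∀ j, MemLp (uj j) (ENNReal.ofReal p) (volume : Measure (Euc n)))
    (hDuj : ∀ j, ∀ᵐ x ∂(volume : Measure (Euc n)), HasFracGradS n s (uj j) x (Duj j x))
    (hDujp : ∀ j, MemLp (Duj j) (ENNReal.ofReal p) (volume : Measure (Euc n)))
    (hconv : Tendsto (fun j =>
        eLpNorm (uj j - u) (ENNReal.ofReal p) (volume : Measure (Euc n)) +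
        eLpNorm (Duj j - Du) (ENNReal.ofReal p) (volume : Measure (Euc n)))
      atTop (𝓝 0))
    (K : Set (Euc n)) (hK : IsCompact K)
    (hsupp : ∀ j, Function.support (uj j) ⊆ K) :
    ∀ r : ℝ, 1 ≤ r → r ≤ p →
      Tendsto (fun j => eLpNorm (Duj j - Du) (ENNReal.ofReal r) (volume : Measure (Euc n)))
        atTop (𝓝 0) := by
  intro r hr1 hrp
  have hp : 1 ≤ ENNReal.ofReal p := ENNReal.one_le_ofReal.2 hp1.le
  have hu_conv := tendsto_of_tendsto_of_tendsto_of_le_of_le tendsto_const_nhds hconv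
    (fun _ => zero_le) fun _ => le_self_add
  have hDu_conv := tendsto_of_tendsto_of_tendsto_of_le_of_le tendsto_const_nhds hconv
    (fun _ => zero_le) fun _ => le_add_self
  have huK : ∀ᵐ y, y ∉ K → u y = 0 := ae_eq_zero_off_of_tendsto_eLpNorm
    (zero_lt_one.trans_le hp).ne' hK.measurableSet hu.1 hsupp hu_conv
  have hujK : ∀ j y, y ∉ K → uj j y = 0 := fun j y hy =>
    Function.notMem_support.mp fun h => hy (hsupp j h)
  have : IsFiniteMeasure (volume.restrict K) := isFiniteMeasure_restrict.2 hK.measure_lt_top.ne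
  have hI : Tendsto (fun j => ∫ y in K, ‖(uj j - u) y‖) atTop (𝓝 0) :=
    tendsto_setIntegral_norm_of_tendsto_eLpNorm hp (fun j => ((huj j).sub hu).1)
      hK.measure_lt_top.ne hu_conv
  have hG : MemLp (fun x : Euc n => (1 + ‖x‖) ^ (-((n : ℝ) + s))) (ENNReal.ofReal r) volume := by
    refine memLp_one_add_norm_rpow_neg (by simp; linarith) ENNReal.ofReal_ne_top ?_
    rw [finrank_euclideanSpace_fin, ENNReal.toReal_ofReal (by linarith)]
    nlinarith
  have ha := hI.const_mul (√n * |cns n s| * 2 ^ ((n : ℝ) + s))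
  rw [mul_zero] at ha
  obtain ⟨R, hKR⟩ := hK.isBounded.subset_closedBall 0
  refine tendsto_eLpNorm_of_le_mul_off (S := Metric.ball 0 (2 * R + 1))
    (ENNReal.one_le_ofReal.2 hr1) (ENNReal.ofReal_le_ofReal hrp)
    (fun j => ((hDujp j).sub hDup).1) hDu_conv measurableSet_ball measure_ball_lt_top.ne hG ha
    fun j => ?_
  filter_upwards [hDu, hDuj j, huK] with x hDux hDujx hux hxR
  rw [Metric.mem_ball, dist_zero_right, not_lt] at hxR
  rw [Real.norm_of_nonneg (by positivity)]
  exact hDujx.norm_sub_le_of_subset_closedBall hs0.le hDux hK.measurableSet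
    ((huj j).restrict K |>.integrable hp) ((hu.restrict K).integrable hp)
    (Eventually.of_forall (hujK j)) huK (hujK j x) hux hKR hxR

/-- if `u_j → u` in `H^{s,p}(ℝ^n)` and all `u_j` are supported in a
fixed compact set `K`, then `D^s u_j → D^s u` in `L^r(ℝ^n,ℝ^n)` for all `r ∈ [1,p]`. -/
theorem stmt6 (n : ℕ) (s p : ℝ) (hs0 : 0 < s) (hs1 : s < 1) (hp1 : 1 < p)
    (u : Euc n → ℝ) (Du : Euc n → Euc n)
    (hu : MemLp u (ENNReal.ofReal p) (volume : Measure (Euc n)))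
    (hDu : ∀ᵐ x ∂(volume : Measure (Euc n)), HasFracGradS n s u x (Du x))
    (hDup : MemLp Du (ENNReal.ofReal p) (volume : Measure (Euc n)))
    (uj : ℕ → Euc n → ℝ) (Duj : ℕ → Euc n → Euc n)
    (huj : ∀ j, MemLp (uj j) (ENNReal.ofReal p) (volume : Measure (Euc n)))
    (hDuj : ∀ j, ∀ᵐ x ∂(volume : Measure (Euc n)), HasFracGradS n s (uj j) x (Duj j x))
    (hDujp : ∀ j, MemLp (Duj j) (ENNReal.ofReal p) (volume : Measure (Euc n)))
    (hconv : Tendsto (fun j =>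
        eLpNorm (uj j - u) (ENNReal.ofReal p) (volume : Measure (Euc n)) +
        eLpNorm (Duj j - Du) (ENNReal.ofReal p) (volume : Measure (Euc n)))
      atTop (𝓝 0))
    (K : Set (Euc n)) (hK : IsCompact K)
    (hsupp : ∀ j, Function.support (uj j) ⊆ K) :
    ∀ r : ℝ, 1 ≤ r → r ≤ p →
      Tendsto (fun j => eLpNorm (Duj j - Du) (ENNReal.ofReal r) (volume : Measure (Euc n)))
        atTop (𝓝 0) :=
  stmt6_general n s p hs0 hp1 u Du hu hDu hDup uj Duj huj hDuj hDujp hconv K hK hsupp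
end
end

section
/- Let 0<s<1, let 1≤k≤n, let indices 1≤j_1<⋯<j_k≤n be given, and let N: ℝ^n → ℝ^k be the corresponding subvector map. Then there exists a continuous function G: [0,∞)×(ℝ^n)^{k-1} → ℝ such that for all a_1,…,a_k ∈ ℝ^n and all ε_1,…,ε_k > 0, the function x ↦ det(N(x-a_1),…,N(x-a_k)) / (|x-a_1|^{n+s+1}⋯|x-a_k|^{n+s+1}) is Lebesgue integrable on (⋃_{j=1}^k B(a_j,ε_j))^c and |∫_{(⋃_{j=1}^k B(a_j,ε_j))^c} det(N(x-a_1),…,N(x-a_k)) / (|x-a_1|^{n+s+1}⋯|x-a_k|^{n+s+1}) dx| ≤ (ε_1^{1-s}/(ε_2⋯ε_k)^{n+s+2})·G(ε_1, a_2-a_1, …, a_k-a_1). -/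
open MeasureTheory Filter Topology
open scoped ENNReal

noncomputable section

/-- determinant of the `k×k` matrix whose columns are the subvectors
`N(x-a_1), …, N(x-a_k)` (rows selected by `jj`). -/
def subDet (n k : ℕ) (jj : Fin k → Fin n) (a : Fin k → Euc n) (x : Euc n) : ℝ :=
  Matrix.det (Matrix.of fun (l i : Fin k) => (x - a i) (jj l))

/-!
Subtracting column `i₀` from the other columns shows `subDet n k jj a x = ⟪w, x - a i₀⟫` for a
vector `w` orthogonal to every `a i - a i₀`. The reflection in the hyperplane through `a i₀`
orthogonal to `w` therefore fixes every `a i`: it preserves the domain of integration and the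
denominator and flips the sign of the numerator, so the integral vanishes and `G = 0` works.
Integrability holds because the integrand is `O(‖x - a i₀‖ ^ (-(n + s)))` off the balls.
-/

open scoped RealInnerProductSpace

section SubDet

variable {n k : ℕ} (jj : Fin k → Fin n) (a : Fin k → Euc n) (i₀ : Fin k)

/-- Subtracting column `i₀` of the `subDet` matrix from the others leaves the columns
`N(a i₀ - a i)`. -/
def subDetBase : Matrix (Fin k) (Fin k) ℝ := Matrix.of fun l i => (a i₀ - a i) (jj l)

lemma subDet_eq_cramer (x : Euc n) :
    subDet n k jj a x = (subDetBase jj a i₀).cramer (fun l => (x - a i₀) (jj l)) i₀ := by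
  set B := (subDetBase jj a i₀).updateCol i₀ fun l => (x - a i₀) (jj l)
  -- the column operations are right multiplication by `1 + e_{i₀} vᵀ`, of determinant `1 + v i₀`
  let v : Fin k → ℝ := fun q => if q = i₀ then 0 else 1
  have hcol : Matrix.of (fun l i => (x - a i) (jj l)) =
      B * (1 + Matrix.replicateCol Unit (Pi.single i₀ (1 : ℝ)) * Matrix.replicateRow Unit v) := by
    have hrank : Matrix.replicateCol Unit (Pi.single i₀ (1 : ℝ)) * Matrix.replicateRow Unit v =
        Matrix.vecMulVec (Pi.single i₀ 1) v := by
      ext; simp [Matrix.mul_apply, Matrix.vecMulVec_apply]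
    rw [hrank, Matrix.mul_add, Matrix.mul_one, Matrix.mul_vecMulVec, Matrix.mulVec_single_one]
    ext l q
    by_cases hq : q = i₀
    · subst hq; simp [B, v, Matrix.vecMulVec_apply]
    · simp [B, v, subDetBase, hq, Matrix.vecMulVec_apply]
  rw [subDet, hcol, Matrix.det_mul, Matrix.det_one_add_replicateCol_mul_replicateRow,
    Matrix.cramer_apply]
  simp [v, B]

lemma cramer_subDetBase_sub (i : Fin k) :
    (subDetBase jj a i₀).cramer (fun l => (a i - a i₀) (jj l)) i₀ = 0 := by
  by_cases hi : i = i₀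
  · subst hi; simp only [sub_self]; exact congrFun (map_zero _) i
  have : (fun l => (a i - a i₀) (jj l)) = -fun l => subDetBase jj a i₀ l i := by
    ext l; simp [subDetBase]
  rw [this, map_neg, (subDetBase jj a i₀).cramer_row_self _ i fun _ => rfl]
  simp [Ne.symm hi]

lemma exists_inner_eq_subDet :
    ∃ w : Euc n, (∀ x, subDet n k jj a x = ⟪w, x - a i₀⟫) ∧ ∀ i, ⟪w, a i - a i₀⟫ = 0 := by
  let L : Euc n →ₗ[ℝ] ℝ := LinearMap.proj i₀ ∘ₗ (subDetBase jj a i₀).cramer ∘ₗ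
    LinearMap.pi fun l => (EuclideanSpace.proj (jj l) : Euc n →L[ℝ] ℝ).toLinearMap
  refine ⟨(InnerProductSpace.toDual ℝ (Euc n)).symm L.toContinuousLinearMap, fun x => ?_,
    fun i => ?_⟩
  · rw [InnerProductSpace.toDual_symm_apply, subDet_eq_cramer jj a i₀]; rfl
  · rw [InnerProductSpace.toDual_symm_apply]; exact cramer_subDetBase_sub jj a i₀ i

end SubDet

theorem MeasureTheory.MeasurePreserving.setIntegral_eq_zero_of_comp_eq_neg {α F : Type*}
    [MeasurableSpace α] [NormedAddCommGroup F] [NormedSpace ℝ F] {μ : Measure α} {T : α → α}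
    (hT : MeasurePreserving T μ μ) (hTe : MeasurableEmbedding T) {s : Set α} (hs : T ⁻¹' s = s)
    {f : α → F} (hf : ∀ x, f (T x) = -f x) : ∫ x in s, f x ∂μ = 0 := by
  have h := hT.setIntegral_preimage_emb hTe f s
  simp only [hs, hf, integral_neg] at h
  have h2 : (2 : ℝ) • ∫ x in s, f x ∂μ = 0 := by
    rw [two_smul]; nth_rw 1 [← h]; exact neg_add_cancel _
  exact (smul_eq_zero.mp h2).resolve_left two_ne_zero

section HyperplaneReflection

variable {E : Type*} [NormedAddCommGroup E] [InnerProductSpace ℝ E]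

def hyperplaneReflection (w c : E) : E ≃ᵢ E :=
  ((IsometryEquiv.subRight c).trans (ℝ ∙ w)ᗮ.reflection.toIsometryEquiv).trans
    (IsometryEquiv.addRight c)

variable (w c : E)

lemma hyperplaneReflection_apply (x : E) :
    hyperplaneReflection w c x = (ℝ ∙ w)ᗮ.reflection (x - c) + c := rfl

lemma hyperplaneReflection_sub_of_inner_eq_zero {b : E} (hb : ⟪w, b - c⟫ = 0) (x : E) :
    hyperplaneReflection w c x - b = (ℝ ∙ w)ᗮ.reflection (x - b) := by
  have hfix : (ℝ ∙ w)ᗮ.reflection (b - c) = b - c :=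
    Submodule.reflection_mem_subspace_eq_self
      (Submodule.mem_orthogonal_singleton_iff_inner_right.2 hb)
  rw [show x - b = (x - c) - (b - c) by abel, map_sub, hfix, hyperplaneReflection_apply]
  abel

lemma dist_hyperplaneReflection_of_inner_eq_zero {b : E} (hb : ⟪w, b - c⟫ = 0) (x : E) :
    dist (hyperplaneReflection w c x) b = dist x b := by
  rw [dist_eq_norm, dist_eq_norm, hyperplaneReflection_sub_of_inner_eq_zero w c hb,
    LinearIsometryEquiv.norm_map]

lemma inner_hyperplaneReflection_sub (x : E) :
    ⟪w, hyperplaneReflection w c x - c⟫ = -⟪w, x - c⟫ := by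
  have h := (ℝ ∙ w)ᗮ.reflection.inner_map_map w (x - c)
  rw [Submodule.reflection_orthogonalComplement_singleton_eq_neg, inner_neg_left] at h
  rw [hyperplaneReflection_sub_of_inner_eq_zero w c (by simp), ← h, neg_neg]

lemma measurePreserving_hyperplaneReflection [FiniteDimensional ℝ E] [MeasurableSpace E]
    [BorelSpace E] : MeasurePreserving (hyperplaneReflection w c) :=
  (measurePreserving_add_right volume c).comp
    ((ℝ ∙ w)ᗮ.reflection.measurePreserving.comp (measurePreserving_sub_right volume c))

end HyperplaneReflection

section InnerSubDivProd

variable {E : Type*} [NormedAddCommGroup E] [InnerProductSpace ℝ E] {ι : Type*} [Fintype ι]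

theorem norm_inner_sub_div_prod_rpow_le [DecidableEq ι] {a : ι → E} {ε : ι → ℝ}
    (hε : ∀ i, 0 < ε i) {x : E} (hx : ∀ i, ε i ≤ ‖x - a i‖) (w : E) (i₀ : ι) {p : ℝ} (hp : 0 ≤ p) :
    ‖⟪w, x - a i₀⟫ / ∏ i, ‖x - a i‖ ^ p‖ ≤
      (‖w‖ / ∏ i ∈ Finset.univ.erase i₀, ε i ^ p) * ‖x - a i₀‖ ^ (-(p - 1)) := by
  set t := ‖x - a i₀‖
  have ht : 0 < t := (hε i₀).trans_le (hx i₀)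
  have hE : 0 < ∏ i ∈ Finset.univ.erase i₀, ε i ^ p :=
    Finset.prod_pos fun i _ => Real.rpow_pos_of_pos (hε i) p
  have hprod : ∏ i, ‖x - a i‖ ^ p = t ^ p * ∏ i ∈ Finset.univ.erase i₀, ‖x - a i‖ ^ p :=
    (Finset.mul_prod_erase _ _ (Finset.mem_univ i₀)).symm
  have hEle : ∏ i ∈ Finset.univ.erase i₀, ε i ^ p ≤ ∏ i ∈ Finset.univ.erase i₀, ‖x - a i‖ ^ p :=
    Finset.prod_le_prod (fun i _ => by have := hε i; positivity)
      fun i _ => Real.rpow_le_rpow (hε i).le (hx i) hp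
  calc ‖⟪w, x - a i₀⟫ / ∏ i, ‖x - a i‖ ^ p‖
      = |⟪w, x - a i₀⟫| / (t ^ p * ∏ i ∈ Finset.univ.erase i₀, ‖x - a i‖ ^ p) := by
        rw [norm_div, Real.norm_eq_abs, Real.norm_of_nonneg (by positivity), hprod]
    _ ≤ ‖w‖ * t / (t ^ p * ∏ i ∈ Finset.univ.erase i₀, ε i ^ p) := by
        gcongr
        exact abs_real_inner_le_norm _ _
    _ = (‖w‖ / ∏ i ∈ Finset.univ.erase i₀, ε i ^ p) * t ^ (-(p - 1)) := by
        rw [Real.rpow_neg ht.le, Real.rpow_sub ht, Real.rpow_one]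
        field_simp

variable [FiniteDimensional ℝ E] [MeasurableSpace E] [BorelSpace E]

theorem integrableOn_compl_ball_rpow_neg (μ : Measure E) [μ.IsAddHaarMeasure] (c : E) {ε r : ℝ}
    (hε : 0 < ε) (hr : (Module.finrank ℝ E : ℝ) < r) :
    IntegrableOn (fun x => ‖x - c‖ ^ (-r)) (Metric.ball c ε)ᶜ μ := by
  have hmaj : Integrable (fun x => (1 + ε⁻¹) ^ r * (1 + ‖x - c‖) ^ (-r)) μ :=
    ((integrable_one_add_norm hr).comp_sub_right c).const_mul _
  refine hmaj.integrableOn.mono' (by fun_prop : Measurable _).aestronglyMeasurable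
    ((ae_restrict_iff' measurableSet_ball.compl).2 (ae_of_all _ fun x hx => ?_))
  have hεt : ε ≤ ‖x - c‖ := by simpa [dist_eq_norm] using hx
  have ht : 0 < ‖x - c‖ := hε.trans_le hεt
  have hr0 : 0 ≤ r := (Nat.cast_nonneg _).trans hr.le
  have hle : 1 + ‖x - c‖ ≤ (1 + ε⁻¹) * ‖x - c‖ := by
    have : 1 ≤ ε⁻¹ * ‖x - c‖ := by rw [inv_mul_eq_div, one_le_div hε]; exact hεt
    linarith
  rw [Real.norm_of_nonneg (by positivity)]
  calc ‖x - c‖ ^ (-r) = (1 + ε⁻¹) ^ r * ((1 + ε⁻¹) * ‖x - c‖) ^ (-r) := by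
        rw [Real.mul_rpow (by positivity) ht.le, ← mul_assoc, ← Real.rpow_add (by positivity),
          add_neg_cancel, Real.rpow_zero, one_mul]
    _ ≤ (1 + ε⁻¹) ^ r * (1 + ‖x - c‖) ^ (-r) :=
        mul_le_mul_of_nonneg_left (Real.rpow_le_rpow_of_nonpos (by positivity) hle (by linarith))
          (by positivity)

theorem integrableOn_inner_sub_div_prod_rpow [DecidableEq ι] (μ : Measure E) [μ.IsAddHaarMeasure]
    (a : ι → E) {ε : ι → ℝ} (hε : ∀ i, 0 < ε i) (w : E) (i₀ : ι) {p : ℝ}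
    (hp : (Module.finrank ℝ E : ℝ) + 1 < p) :
    IntegrableOn (fun x => ⟪w, x - a i₀⟫ / ∏ i, ‖x - a i‖ ^ p)
      (⋃ i, Metric.ball (a i) (ε i))ᶜ μ := by
  have hmem : ∀ x ∈ (⋃ i, Metric.ball (a i) (ε i))ᶜ, ∀ i, ε i ≤ ‖x - a i‖ := by
    intro x hx
    simpa [dist_eq_norm] using hx
  have hmaj := ((integrableOn_compl_ball_rpow_neg μ (a i₀) (hε i₀) (r := p - 1)
    (by linarith)).mono_set (Set.compl_subset_compl.2
      (Set.subset_iUnion (fun i => Metric.ball (a i) (ε i)) i₀))).const_mul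
    (‖w‖ / ∏ i ∈ Finset.univ.erase i₀, ε i ^ p)
  have hp0 : 0 ≤ p := by linarith [(Nat.cast_nonneg (Module.finrank ℝ E) : (0 : ℝ) ≤ _)]
  refine hmaj.mono' (by fun_prop : Measurable _).aestronglyMeasurable
    ((ae_restrict_iff' ?_).2 (ae_of_all _ fun x hx =>
      norm_inner_sub_div_prod_rpow_le hε (hmem x hx) w i₀ hp0))
  exact (isOpen_iUnion fun i => Metric.isOpen_ball).isClosed_compl.measurableSet

theorem setIntegral_inner_sub_div_prod_rpow_eq_zero (a : ι → E) (r : ι → ℝ) (w : E) (i₀ : ι)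
    (horth : ∀ i, ⟪w, a i - a i₀⟫ = 0) (p : ℝ) :
    ∫ x in (⋃ i, Metric.ball (a i) (r i))ᶜ, ⟪w, x - a i₀⟫ / ∏ i, ‖x - a i‖ ^ p = 0 := by
  have hdist : ∀ x i, dist (hyperplaneReflection w (a i₀) x) (a i) = dist x (a i) := fun x i =>
    dist_hyperplaneReflection_of_inner_eq_zero w _ (horth i) x
  refine (measurePreserving_hyperplaneReflection w (a i₀)).setIntegral_eq_zero_of_comp_eq_neg
    (hyperplaneReflection w (a i₀)).toHomeomorph.measurableEmbedding ?_ fun x => ?_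
  · ext x; simp [Metric.mem_ball, hdist]
  · simp only [← dist_eq_norm, hdist, inner_hyperplaneReflection_sub, neg_div]

end InnerSubDivProd

theorem stmt11_general (n k : ℕ) (hk : 0 < k) (s : ℝ) (hs0 : 0 < s)
    (jj : Fin k → Fin n) :
    ∃ G : ℝ → ({i : Fin k // i ≠ ⟨0, hk⟩} → Euc n) → ℝ,
      Continuous (fun q : ℝ × ({i : Fin k // i ≠ ⟨0, hk⟩} → Euc n) => G q.1 q.2) ∧
      ∀ (a : Fin k → Euc n) (ε : Fin k → ℝ), (∀ i, 0 < ε i) →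
        IntegrableOn
          (fun x : Euc n => subDet n k jj a x / ∏ i, ‖x - a i‖ ^ ((n : ℝ) + s + 1))
          (⋃ i, Metric.ball (a i) (ε i))ᶜ (volume : Measure (Euc n)) ∧
        |∫ x in (⋃ i, Metric.ball (a i) (ε i))ᶜ,
            subDet n k jj a x / ∏ i, ‖x - a i‖ ^ ((n : ℝ) + s + 1)| ≤
          (ε ⟨0, hk⟩ ^ (1 - s) /
            (∏ i ∈ Finset.univ.filter (fun i : Fin k => i ≠ ⟨0, hk⟩), ε i) ^ ((n : ℝ) + s + 2)) *
            G (ε ⟨0, hk⟩) (fun i => a i.1 - a ⟨0, hk⟩) := by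
  refine ⟨fun _ _ => 0, continuous_const, fun a ε hε => ?_⟩
  obtain ⟨w, hdet, horth⟩ := exists_inner_eq_subDet jj a ⟨0, hk⟩
  simp_rw [hdet]
  refine ⟨integrableOn_inner_sub_div_prod_rpow volume a hε w _ ?_, ?_⟩
  · rw [finrank_euclideanSpace_fin]; linarith
  · rw [setIntegral_inner_sub_div_prod_rpow_eq_zero a ε w _ horth]; simp

/-- key estimate for the fractional Piola identity. -/
theorem stmt11 (n k : ℕ) (hk : 0 < k) (hkn : k ≤ n) (s : ℝ) (hs0 : 0 < s) (hs1 : s < 1)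
    (jj : Fin k → Fin n) (hjj : StrictMono jj) :
    ∃ G : ℝ → ({i : Fin k // i ≠ ⟨0, hk⟩} → Euc n) → ℝ,
      Continuous (fun q : ℝ × ({i : Fin k // i ≠ ⟨0, hk⟩} → Euc n) => G q.1 q.2) ∧
      ∀ (a : Fin k → Euc n) (ε : Fin k → ℝ), (∀ i, 0 < ε i) →
        IntegrableOn
          (fun x : Euc n => subDet n k jj a x / ∏ i, ‖x - a i‖ ^ ((n : ℝ) + s + 1))
          (⋃ i, Metric.ball (a i) (ε i))ᶜ (volume : Measure (Euc n)) ∧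
        |∫ x in (⋃ i, Metric.ball (a i) (ε i))ᶜ,
            subDet n k jj a x / ∏ i, ‖x - a i‖ ^ ((n : ℝ) + s + 1)| ≤
          (ε ⟨0, hk⟩ ^ (1 - s) /
            (∏ i ∈ Finset.univ.filter (fun i : Fin k => i ≠ ⟨0, hk⟩), ε i) ^ ((n : ℝ) + s + 2)) *
            G (ε ⟨0, hk⟩) (fun i => a i.1 - a ⟨0, hk⟩) :=
  stmt11_general n k hk s hs0 jj
end
end
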